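/- Let n be a positive integer divisible by 8, let C be a singly-even self-dual binary code of length n with minimum distance d = d(C), and let C_max be its maximal doubly-even subcode. Then every codeword x ∈ C_max^⊥ whose weight is not divisible by 4 satisfies d ≤ w(x) ≤ n − d. -/

import Mathlib

/-!
A vector `x ∈ C_max^⊥` outside `C` lies in the shadow of `C`: `x ⬝ᵥ c ≡ wt c / 2 (mod 2)` for
all `c ∈ C`. Poisson summation of `u ↦ i ^ wt u` over the coset `x + C`, together with the Gauss
sum `∑ u, i ^ wt u * (-1) ^ (u ⬝ᵥ c) = (1 + i) ^ n * (-i) ^ wt c`, gives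
`(1 + i) ^ n = |C| * i ^ wt x`. For `8 ∣ n` the left side is the positive real `16 ^ (n / 8)`,
so `4 ∣ wt x`. Hence a vector of `C_max^⊥` of weight `≢ 0 (mod 4)` is a nonzero codeword of `C`,
and so is its complement `x + 1`, of weight `n - wt x`.
-/


open Finset

/-- Hamming weight of a binary vector. -/
def wt {n : ℕ} (a : Fin n → ZMod 2) : ℕ :=
  (Finset.univ.filter fun i => a i ≠ 0).card

/-- Number of coordinates where both vectors are 1. -/
def mu {n : ℕ} (a b : Fin n → ZMod 2) : ℕ :=
  (Finset.univ.filter fun i => a i = 1 ∧ b i = 1).card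

/-- The dual code with respect to the standard inner product over F_2. -/
def dualCode {n : ℕ} (C : Submodule (ZMod 2) (Fin n → ZMod 2)) :
    Submodule (ZMod 2) (Fin n → ZMod 2) where
  carrier := {x | ∀ c ∈ C, ∑ i, x i * c i = 0}
  zero_mem' := by intro c hc; simp
  add_mem' := by
    intro x y hx hy c hc
    simp [add_mul, Finset.sum_add_distrib, hx c hc, hy c hc]
  smul_mem' := by
    intro r x hx c hc
    simp [mul_assoc, ← Finset.mul_sum, hx c hc]

def IsSelfDual {n : ℕ} (C : Submodule (ZMod 2) (Fin n → ZMod 2)) : Prop :=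
  C = dualCode C

def DoublyEven {n : ℕ} (C : Submodule (ZMod 2) (Fin n → ZMod 2)) : Prop :=
  ∀ c ∈ C, 4 ∣ wt c

def SinglyEven {n : ℕ} (C : Submodule (ZMod 2) (Fin n → ZMod 2)) : Prop :=
  ∃ c ∈ C, ¬ 4 ∣ wt c

/-- Minimum distance: smallest nonzero weight of a codeword. -/
noncomputable def minDist {n : ℕ} (C : Submodule (ZMod 2) (Fin n → ZMod 2)) : ℕ :=
  sInf {d | ∃ c ∈ C, c ≠ 0 ∧ wt c = d}

open Matrix Complex

variable {n : ℕ}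

lemma wt_eq_sum_val (a : Fin n → ZMod 2) : wt a = ∑ i, (a i).val := by
  rw [wt, card_filter]
  exact sum_congr rfl fun i _ => by generalize a i = s; revert s; decide

lemma mu_eq_sum_val (a b : Fin n → ZMod 2) : mu a b = ∑ i, (a i).val * (b i).val := by
  rw [mu, card_filter]
  exact sum_congr rfl fun i _ => by generalize a i = s; generalize b i = t; revert s t; decide

lemma mu_comm (a b : Fin n → ZMod 2) : mu a b = mu b a := by
  simp only [mu_eq_sum_val, mul_comm]

lemma mu_self (a : Fin n → ZMod 2) : mu a a = wt a := by
  rw [mu_eq_sum_val, wt_eq_sum_val]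
  exact sum_congr rfl fun i _ => by generalize a i = s; revert s; decide

lemma mu_one_right (a : Fin n → ZMod 2) : mu a 1 = wt a := by
  simp [mu_eq_sum_val, wt_eq_sum_val, ZMod.val_one]

lemma wt_zero : wt (0 : Fin n → ZMod 2) = 0 := by simp [wt]

lemma wt_one : wt (1 : Fin n → ZMod 2) = n := by simp [wt]

lemma wt_add_add_two_mul_mu (a b : Fin n → ZMod 2) :
    wt (a + b) + 2 * mu a b = wt a + wt b := by
  simp only [wt_eq_sum_val, mu_eq_sum_val, mul_sum, ← sum_add_distrib, Pi.add_apply]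
  exact sum_congr rfl fun i _ => by generalize a i = s; generalize b i = t; revert s t; decide

lemma wt_add_one_add_wt (a : Fin n → ZMod 2) : wt (a + 1) + wt a = n := by
  have h := wt_add_add_two_mul_mu a 1
  rw [mu_one_right, wt_one] at h
  omega

lemma dotProduct_eq_mu (a b : Fin n → ZMod 2) : a ⬝ᵥ b = mu a b := by
  simp [dotProduct, mu_eq_sum_val]

lemma dotProduct_eq_zero_iff_two_dvd_mu (a b : Fin n → ZMod 2) : a ⬝ᵥ b = 0 ↔ 2 ∣ mu a b := by
  rw [dotProduct_eq_mu, ZMod.natCast_eq_zero_iff]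

lemma mu_add_right_modEq (a b c : Fin n → ZMod 2) :
    mu a (b + c) ≡ mu a b + mu a c [MOD 2] := by
  rw [← ZMod.natCast_eq_natCast_iff, Nat.cast_add, ← dotProduct_eq_mu, ← dotProduct_eq_mu,
    ← dotProduct_eq_mu, dotProduct_add]

lemma neg_one_pow_mu_add_right (a b c : Fin n → ZMod 2) :
    (-1 : ℂ) ^ mu a (b + c) = (-1) ^ mu a b * (-1) ^ mu a c := by
  rw [← pow_add, pow_eq_pow_of_modEq (mu_add_right_modEq a b c) (by norm_num)]

lemma neg_one_pow_mu_add_left (a b c : Fin n → ZMod 2) :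
    (-1 : ℂ) ^ mu (a + b) c = (-1) ^ mu a c * (-1) ^ mu b c := by
  simp only [mu_comm _ c, neg_one_pow_mu_add_right]

lemma mem_dualCode_iff {C : Submodule (ZMod 2) (Fin n → ZMod 2)} {x : Fin n → ZMod 2} :
    x ∈ dualCode C ↔ ∀ c ∈ C, x ⬝ᵥ c = 0 :=
  Iff.rfl

lemma minDist_le_wt {C : Submodule (ZMod 2) (Fin n → ZMod 2)} {c : Fin n → ZMod 2}
    (hc : c ∈ C) (hc0 : c ≠ 0) : minDist C ≤ wt c :=
  Nat.sInf_le ⟨c, hc, hc0, rfl⟩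

/-- Conway–Sloane's shadow condition `x ⬝ᵥ c ≡ wt c / 2 (mod 2)`; for a singly-even self-dual
code `C` it cuts out exactly `C_max^⊥ \ C`. -/
def IsInShadow (C : Submodule (ZMod 2) (Fin n → ZMod 2)) (x : Fin n → ZMod 2) : Prop :=
  ∀ c ∈ C, 2 * mu x c ≡ wt c [MOD 4]

namespace IsSelfDual

variable {C : Submodule (ZMod 2) (Fin n → ZMod 2)} (hC : IsSelfDual C)
include hC

lemma mem_iff {x : Fin n → ZMod 2} : x ∈ C ↔ ∀ c ∈ C, x ⬝ᵥ c = 0 :=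
  SetLike.ext_iff.mp hC x

lemma two_dvd_mu {a b : Fin n → ZMod 2} (ha : a ∈ C) (hb : b ∈ C) : 2 ∣ mu a b :=
  (dotProduct_eq_zero_iff_two_dvd_mu a b).mp (hC.mem_iff.mp ha b hb)

lemma two_dvd_wt {a : Fin n → ZMod 2} (ha : a ∈ C) : 2 ∣ wt a :=
  mu_self a ▸ hC.two_dvd_mu ha ha

lemma one_mem : (1 : Fin n → ZMod 2) ∈ C := by
  refine hC.mem_iff.mpr fun c hc => ?_
  rw [dotProduct_eq_zero_iff_two_dvd_mu, mu_comm, mu_one_right]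
  exact hC.two_dvd_wt hc

/- Some `c₀ ∈ C` has `x ⬝ᵥ c₀ = 1`, so `c₀ ∉ C_max`; for every other `c ∈ C \ C_max` the sum
`c + c₀` lies in `C_max`, which forces `x ⬝ᵥ c = 1` as well. -/
lemma isInShadow_of_mem_dualCode {x : Fin n → ZMod 2}
    {Cmax : Submodule (ZMod 2) (Fin n → ZMod 2)}
    (hmax : (Cmax : Set (Fin n → ZMod 2)) = {c | c ∈ C ∧ 4 ∣ wt c})
    (hx : x ∈ dualCode Cmax) (hxC : x ∉ C) : IsInShadow C x := by
  have hmax_even {c : Fin n → ZMod 2} (hc : c ∈ C) (h4 : 4 ∣ wt c) : 2 ∣ mu x c :=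
    (dotProduct_eq_zero_iff_two_dvd_mu x c).mp (hx c (Set.ext_iff.mp hmax c |>.mpr ⟨hc, h4⟩))
  obtain ⟨c₀, hc₀, hxc₀⟩ : ∃ c₀ ∈ C, ¬ 2 ∣ mu x c₀ := by
    rw [hC.mem_iff] at hxC
    push Not at hxC
    simpa only [Ne, dotProduct_eq_zero_iff_two_dvd_mu] using hxC
  have hc₀4 : ¬ 4 ∣ wt c₀ := fun h4 => hxc₀ (hmax_even hc₀ h4)
  intro c hc
  unfold Nat.ModEq
  by_cases h4 : 4 ∣ wt c
  · have hxc := hmax_even hc h4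
    omega
  · have hsum := wt_add_add_two_mul_mu c c₀
    have hmu := hC.two_dvd_mu hc hc₀
    have hwt := hC.two_dvd_wt hc
    have hwt₀ := hC.two_dvd_wt hc₀
    have hsum_even := hmax_even (C.add_mem hc hc₀) (by omega)
    have hpar := mu_add_right_modEq x c c₀
    unfold Nat.ModEq at hpar
    omega

end IsSelfDual

section CharacterSums

variable (C : Submodule (ZMod 2) (Fin n → ZMod 2)) [Fintype C] {v : Fin n → ZMod 2}

lemma sum_neg_one_pow_mu_of_mem_dualCode (hv : v ∈ dualCode C) :
    ∑ c : C, (-1 : ℂ) ^ mu v c = Nat.card C := by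
  have hterm (c : C) : (-1 : ℂ) ^ mu v c = 1 :=
    Even.neg_one_pow (even_iff_two_dvd.mpr
      ((dotProduct_eq_zero_iff_two_dvd_mu v c).mp (hv c c.2)))
  simp [hterm, Nat.card_eq_fintype_card]

lemma sum_neg_one_pow_mu_of_notMem_dualCode (hv : v ∉ dualCode C) :
    ∑ c : C, (-1 : ℂ) ^ mu v c = 0 := by
  obtain ⟨c₀, hc₀, hvc₀⟩ : ∃ c₀ ∈ C, v ⬝ᵥ c₀ ≠ 0 := by
    simpa only [mem_dualCode_iff, not_forall, exists_prop] using hv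
  have hodd : (-1 : ℂ) ^ mu v c₀ = -1 := by
    rw [Ne, dotProduct_eq_zero_iff_two_dvd_mu] at hvc₀
    exact Odd.neg_one_pow (Nat.odd_iff.mpr (by omega))
  have hshift := Equiv.sum_comp (Equiv.addRight (⟨c₀, hc₀⟩ : C))
    fun c : C => (-1 : ℂ) ^ mu v c
  simp only [Equiv.coe_addRight, Submodule.coe_add, neg_one_pow_mu_add_right, hodd,
    mul_neg_one, sum_neg_distrib] at hshift
  exact CharZero.neg_eq_self_iff.mp hshift

end CharacterSums

lemma sum_I_pow_wt_mul_neg_one_pow_mu (c : Fin n → ZMod 2) :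
    ∑ u : Fin n → ZMod 2, I ^ wt u * (-1 : ℂ) ^ mu u c = (1 + I) ^ n * (-I) ^ wt c := by
  have hcoord (s : ZMod 2) :
      ∑ t : ZMod 2, I ^ t.val * (-1 : ℂ) ^ (t.val * s.val) = (1 + I) * (-I) ^ s.val := by
    obtain rfl | rfl : s = 0 ∨ s = 1 := by revert s; decide
    all_goals simp [show (univ : Finset (ZMod 2)) = {0, 1} from rfl, ZMod.val_one]
    linear_combination I_sq
  simp only [wt_eq_sum_val, mu_eq_sum_val, ← prod_pow_eq_pow_sum, ← prod_mul_distrib]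
  rw [← Fintype.prod_sum (fun i (t : ZMod 2) => I ^ t.val * (-1 : ℂ) ^ (t.val * (c i).val))]
  simp only [hcoord, prod_mul_distrib, prod_const, card_univ, Fintype.card_fin]

/- Poisson summation over the coset `x + C` of the self-dual code `C`. -/
lemma IsSelfDual.sum_sum_mul_neg_one_pow_mu_add {C : Submodule (ZMod 2) (Fin n → ZMod 2)}
    (hC : IsSelfDual C) [Fintype C] (f : (Fin n → ZMod 2) → ℂ) (x : Fin n → ZMod 2) :
    ∑ c : C, ∑ u, f u * (-1 : ℂ) ^ mu (u + x) c = Nat.card C * ∑ c : C, f (c + x) := by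
  classical
  have hinner (u : Fin n → ZMod 2) : ∑ c : C, (-1 : ℂ) ^ mu (u + x) c =
      if u + x ∈ C then (Nat.card C : ℂ) else 0 := by
    split_ifs with h
    · exact sum_neg_one_pow_mu_of_mem_dualCode C (hC ▸ h)
    · exact sum_neg_one_pow_mu_of_notMem_dualCode C (hC ▸ h)
  rw [sum_comm]
  simp only [← mul_sum, hinner, mul_ite, mul_zero]
  rw [← Equiv.sum_comp (Equiv.addRight x)]
  simp only [Equiv.coe_addRight, add_assoc, ZModModule.add_self, add_zero]
  rw [← sum_filter, ← sum_mul, mul_comm, sum_subtype (p := (· ∈ C)) _ fun w => by simp]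

lemma neg_I_pow_eq_neg_one_pow {k m : ℕ} (h : 2 * m ≡ k [MOD 4]) : (-I) ^ k = (-1) ^ m := by
  rw [← pow_eq_pow_of_modEq h (by rw [neg_pow, I_pow_four]; norm_num), pow_mul, neg_sq, I_sq]

lemma one_add_I_pow_eight : (1 + I) ^ 8 = 16 := by
  rw [show 8 = 2 * 4 from rfl, pow_mul, add_sq, I_sq]
  ring_nf
  norm_num [I_pow_four]

lemma four_dvd_of_ofReal_eq_mul_I_pow {a b : ℝ} {k : ℕ} (ha : 0 < a) (hb : 0 < b)
    (h : (a : ℂ) = b * I ^ k) : 4 ∣ k := by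
  rw [pow_eq_pow_mod _ I_pow_four] at h
  have hk : k % 4 < 4 := Nat.mod_lt _ (by norm_num)
  interval_cases hr : k % 4
  · omega
  all_goals simp [Complex.ext_iff, pow_succ, ha.ne'] at h
  linarith

namespace IsSelfDual

variable {C : Submodule (ZMod 2) (Fin n → ZMod 2)} (hC : IsSelfDual C) {x : Fin n → ZMod 2}
include hC

/- Poisson summation of `u ↦ I ^ wt u`: by the Gauss sum every term on the Fourier side is
`(1 + I) ^ n`, and every vector of `x + C` has weight `≡ wt x (mod 4)`. -/
lemma one_add_I_pow_eq_card_mul_I_pow_wt [Fintype C] (hx : IsInShadow C x) :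
    (1 + I) ^ n = Nat.card C * I ^ wt x := by
  have hleft (c : C) : ∑ u, I ^ wt u * (-1 : ℂ) ^ mu (u + x) c = (1 + I) ^ n := by
    simp only [neg_one_pow_mu_add_left, ← mul_assoc, ← sum_mul,
      sum_I_pow_wt_mul_neg_one_pow_mu]
    rw [mul_assoc, neg_I_pow_eq_neg_one_pow (hx c c.2), ← mul_pow]
    norm_num
  have hright (c : C) : I ^ wt ((c : Fin n → ZMod 2) + x) = I ^ wt x := by
    refine pow_eq_pow_of_modEq ?_ I_pow_four
    have hsum := wt_add_add_two_mul_mu c x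
    have hshadow := hx c c.2
    rw [mu_comm] at hsum
    unfold Nat.ModEq at *
    omega
  have hN : (Nat.card C : ℂ) ≠ 0 := Nat.cast_ne_zero.mpr Nat.card_pos.ne'
  have key := hC.sum_sum_mul_neg_one_pow_mu_add (fun u => I ^ wt u) x
  simp only [hleft, hright, sum_const, card_univ, nsmul_eq_mul,
    ← Nat.card_eq_fintype_card] at key
  exact mul_left_cancel₀ hN key

lemma four_dvd_wt_of_isInShadow (h8 : 8 ∣ n) (hx : IsInShadow C x) : 4 ∣ wt x := by
  classical
  obtain ⟨m, rfl⟩ := h8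
  have h := hC.one_add_I_pow_eq_card_mul_I_pow_wt hx
  rw [pow_mul, one_add_I_pow_eight, ← ofReal_ofNat, ← ofReal_pow, ← ofReal_natCast] at h
  exact four_dvd_of_ofReal_eq_mul_I_pow (by positivity) (by exact_mod_cast Nat.card_pos) h

end IsSelfDual

theorem weight_bounds_in_dual_of_Cmax_general {n : ℕ} (h8 : 8 ∣ n)
    (C Cmax : Submodule (ZMod 2) (Fin n → ZMod 2))
    (hsd : IsSelfDual C)
    (hmax : (Cmax : Set (Fin n → ZMod 2)) = {c | c ∈ C ∧ 4 ∣ wt c}) :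
    ∀ x ∈ dualCode Cmax, ¬ 4 ∣ wt x →
      minDist C ≤ wt x ∧ wt x ≤ n - minDist C := by
  intro x hx hx4
  have hxC : x ∈ C := by
    by_contra hxC
    exact hx4 (hsd.four_dvd_wt_of_isInShadow h8 (hsd.isInShadow_of_mem_dualCode hmax hx hxC))
  have hcompl := wt_add_one_add_wt x
  have hx0 : x ≠ 0 := by
    rintro rfl
    simp [wt_zero] at hx4
  have hx1 : x + 1 ≠ 0 := by
    intro h
    rw [h, wt_zero] at hcompl
    omega
  have hle := minDist_le_wt hxC hx0
  have hle' := minDist_le_wt (C.add_mem hxC hsd.one_mem) hx1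
  omega

theorem weight_bounds_in_dual_of_Cmax {n : ℕ} (hn : 0 < n) (h8 : 8 ∣ n)
    (C Cmax : Submodule (ZMod 2) (Fin n → ZMod 2))
    (hsd : IsSelfDual C) (hse : SinglyEven C)
    (hmax : (Cmax : Set (Fin n → ZMod 2)) = {c | c ∈ C ∧ 4 ∣ wt c}) :
    ∀ x ∈ dualCode Cmax, ¬ 4 ∣ wt x →
      minDist C ≤ wt x ∧ wt x ≤ n - minDist C :=
  weight_bounds_in_dual_of_Cmax_general h8 C Cmax hsd hmax
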